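/- arXiv:1308.6270 — 5 statements merged into one kernel-verified Lean document; each statement's English description precedes it below -/
import Mathlib

section
/- For any finite set Ω, any subset F ⊆ Ω, any two probability distributions π_j, π_{j+1} on Ω that are strictly positive on F with π_j(F) > 0 and π_{j+1}(F) > 0, any constant C > 0, and any function g : ℝ → ℝ satisfying g(x) = x⁻¹ · g(x⁻¹) for all x > 0 and with the denominator below nonzero, the ratio π_{j+1}(F)/π_j(F) equals C · ⟨g(C·π_j/π_{j+1})⟩_j / ⟨g(C⁻¹·π_{j+1}/π_j)⟩_{j+1}, where ⟨f⟩_j denotes the expectation of f under the conditional distribution π_j(·|F) = π_j(·)/π_j(F) on F. -/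
open Finset

/-!
Bennett's identity is a pointwise one summed over `F`: the symmetry `g x = x⁻¹ g x⁻¹` at
`x = C πⱼ(E)/πⱼ₊₁(E)` gives `πⱼ(E) g(C πⱼ/πⱼ₊₁) = C⁻¹ πⱼ₊₁(E) g(C⁻¹ πⱼ₊₁/πⱼ)`, so the two
unnormalised averages differ by the factor `C⁻¹`, and the normalisations `πⱼ(F)`, `πⱼ₊₁(F)`
leave exactly the ratio `πⱼ₊₁(F)/πⱼ(F)`.
-/

lemma mul_apply_eq_inv_mul_mul_apply_of_reciprocal {g : ℝ → ℝ}
    (hg : ∀ x : ℝ, 0 < x → g x = x⁻¹ * g x⁻¹) {a b C : ℝ} (ha : 0 < a) (hb : 0 < b)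
    (hC : 0 < C) :
    a * g (C * a / b) = C⁻¹ * (b * g (C⁻¹ * b / a)) := by
  have hinv : (C * a / b)⁻¹ = C⁻¹ * b / a := by field_simp
  rw [hg _ (by positivity), hinv]
  field_simp

lemma sum_mul_apply_eq_inv_mul_sum_of_reciprocal {ι : Type*} (s : Finset ι) {p q : ι → ℝ}
    (hp : ∀ i ∈ s, 0 < p i) (hq : ∀ i ∈ s, 0 < q i) {g : ℝ → ℝ}
    (hg : ∀ x : ℝ, 0 < x → g x = x⁻¹ * g x⁻¹) {C : ℝ} (hC : 0 < C) :
    ∑ i ∈ s, p i * g (C * p i / q i) = C⁻¹ * ∑ i ∈ s, q i * g (C⁻¹ * q i / p i) := by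
  rw [mul_sum]
  exact sum_congr rfl fun i hi =>
    mul_apply_eq_inv_mul_mul_apply_of_reciprocal hg (hp i hi) (hq i hi) hC

lemma div_eq_mul_div_div_of_inv_mul {A B C S : ℝ} (hC : C ≠ 0) (hS : S ≠ 0) :
    B / A = C * ((C⁻¹ * S / A) / (S / B)) := by
  rw [mul_div_assoc, mul_div_assoc, ← mul_assoc, mul_inv_cancel₀ hC, one_mul,
    div_div_div_cancel_left' _ _ hS]

theorem bennett_acceptance_ratio_general
    {Ω : Type*} (F : Finset Ω)
    (πj πj1 : Ω → ℝ)
    (hπj_pos : ∀ E ∈ F, 0 < πj E) (hπj1_pos : ∀ E ∈ F, 0 < πj1 E)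
    (C : ℝ) (hC : 0 < C)
    (g : ℝ → ℝ) (hg : ∀ x : ℝ, 0 < x → g x = x⁻¹ * g x⁻¹)
    (hden : ((∑ E ∈ F, πj1 E * g (C⁻¹ * πj1 E / πj E)) / ∑ E ∈ F, πj1 E) ≠ 0) :
    (∑ E ∈ F, πj1 E) / (∑ E ∈ F, πj E) =
      C * (((∑ E ∈ F, πj E * g (C * πj E / πj1 E)) / ∑ E ∈ F, πj E) /
           ((∑ E ∈ F, πj1 E * g (C⁻¹ * πj1 E / πj E)) / ∑ E ∈ F, πj1 E)) := by
  rw [sum_mul_apply_eq_inv_mul_sum_of_reciprocal F hπj_pos hπj1_pos hg hC]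
  exact div_eq_mul_div_div_of_inv_mul hC.ne' (div_ne_zero_iff.mp hden).1

/-- Bennett's acceptance ratio identity (Eq. (SM3)):
`π_{j+1}(F)/π_j(F) = C ⟨g(C π_j/π_{j+1})⟩_j / ⟨g(C⁻¹ π_{j+1}/π_j)⟩_{j+1}`,
where `⟨f⟩_j = (1/π_j(F)) ∑_{E ∈ F} π_j(E) f(E)`. -/
theorem bennett_acceptance_ratio
    {Ω : Type*} [Fintype Ω] (F : Finset Ω)
    (πj πj1 : Ω → ℝ)
    (hπj_nonneg : ∀ E, 0 ≤ πj E) (hπj_sum : ∑ E, πj E = 1)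
    (hπj1_nonneg : ∀ E, 0 ≤ πj1 E) (hπj1_sum : ∑ E, πj1 E = 1)
    (hπj_pos : ∀ E ∈ F, 0 < πj E) (hπj1_pos : ∀ E ∈ F, 0 < πj1 E)
    (hFj : 0 < ∑ E ∈ F, πj E) (hFj1 : 0 < ∑ E ∈ F, πj1 E)
    (C : ℝ) (hC : 0 < C)
    (g : ℝ → ℝ) (hg : ∀ x : ℝ, 0 < x → g x = x⁻¹ * g x⁻¹)
    (hden : ((∑ E ∈ F, πj1 E * g (C⁻¹ * πj1 E / πj E)) / ∑ E ∈ F, πj1 E) ≠ 0) :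
    (∑ E ∈ F, πj1 E) / (∑ E ∈ F, πj E) =
      C * (((∑ E ∈ F, πj E * g (C * πj E / πj1 E)) / ∑ E ∈ F, πj E) /
           ((∑ E ∈ F, πj1 E * g (C⁻¹ * πj1 E / πj E)) / ∑ E ∈ F, πj1 E)) :=
  bennett_acceptance_ratio_general F πj πj1 hπj_pos hπj1_pos C hC g hg hden
end

section
/- Let p and q be probability distributions on a finite set F. Then (∑_{E ∈ F} 2·p(E)·q(E)/(p(E)+q(E)))⁻¹ − 1 ≤ (1 − ‖p − q‖₁)⁻¹, where ‖p − q‖₁ = (1/2)∑_E |p(E) − q(E)| is the total variation distance, assuming ‖p−q‖₁ < 1 and all sums are well-defined (interpreting 2pq/(p+q) as 0 when p(E)=q(E)=0). -/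
/-!
The harmonic mean of two nonnegative numbers dominates their minimum, and for probability
vectors `∑ min (p E) (q E) = 1 - ‖p - q‖₁`. Hence the harmonic-mean sum is at least
`1 - ‖p - q‖₁ > 0`, so its inverse is at most `(1 - ‖p - q‖₁)⁻¹`, and subtracting `1` only helps.
-/

open Finset

section LinearOrderedField

variable {K : Type*} [Field K] [LinearOrder K] [IsStrictOrderedRing K]

-- For `a = b = 0` the right-hand side is the junk value `0 / 0 = 0`, which still works.
theorem min_le_two_mul_mul_div_add {a b : K} (ha : 0 ≤ a) (hb : 0 ≤ b) :
    min a b ≤ 2 * a * b / (a + b) := by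
  rcases (add_nonneg ha hb).eq_or_lt with hab | hab
  · obtain ⟨rfl, rfl⟩ : a = 0 ∧ b = 0 := ⟨by linarith, by linarith⟩
    simp
  · rw [le_div_iff₀ hab]
    rcases le_total a b with h | h
    · rw [min_eq_left h]; nlinarith
    · rw [min_eq_right h]; nlinarith

theorem two_mul_min_eq_add_sub_abs_sub (a b : K) : 2 * min a b = a + b - |a - b| := by
  linarith [min_add_max a b, max_sub_min_eq_abs' a b]

theorem Finset.sum_min_eq_half_sum_add_sub_abs {ι : Type*} (s : Finset ι) (p q : ι → K) :
    ∑ i ∈ s, min (p i) (q i) = (∑ i ∈ s, p i + ∑ i ∈ s, q i - ∑ i ∈ s, |p i - q i|) / 2 := by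
  rw [← sum_add_distrib, ← sum_sub_distrib, eq_div_iff two_ne_zero, sum_mul]
  exact sum_congr rfl fun i _ ↦ by rw [mul_comm, two_mul_min_eq_add_sub_abs_sub]

end LinearOrderedField

/-- The harmonic-mean sum bound behind Eq. (SM9): for probability distributions
`p, q` on a finite set with total variation distance `‖p−q‖₁ < 1`,
`(∑ 2 p q/(p+q))⁻¹ − 1 ≤ (1 − ‖p−q‖₁)⁻¹`. -/
theorem bennett_variance_bound
    {F : Type*} [Fintype F] (p q : F → ℝ)
    (hp_nonneg : ∀ E, 0 ≤ p E) (hq_nonneg : ∀ E, 0 ≤ q E)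
    (hp_sum : ∑ E, p E = 1) (hq_sum : ∑ E, q E = 1)
    (htv : (1 / 2) * ∑ E, |p E - q E| < 1) :
    (∑ E, 2 * p E * q E / (p E + q E))⁻¹ - 1 ≤
      (1 - (1 / 2) * ∑ E, |p E - q E|)⁻¹ := by
  set S := ∑ E, 2 * p E * q E / (p E + q E)
  set T := (1 / 2) * ∑ E, |p E - q E|
  have h_overlap : ∑ E, min (p E) (q E) = 1 - T := by
    rw [sum_min_eq_half_sum_add_sub_abs, hp_sum, hq_sum]; ring
  have h_overlap_le : 1 - T ≤ S := by
    rw [← h_overlap]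
    exact sum_le_sum fun E _ ↦ min_le_two_mul_mul_div_add (hp_nonneg E) (hq_nonneg E)
  calc S⁻¹ - 1 ≤ S⁻¹ := by linarith
    _ ≤ (1 - T)⁻¹ := inv_anti₀ (by linarith) h_overlap_le
end

section
/- Let G = (V, E) be a finite graph with nonnegative edge weights φ, let S ⊆ V, and let R be a minimum-weight edge set with ∂R = S. If e = (u,v) ∈ R and S' = S Δ {u,v}, then R \ {e} is a minimum-weight edge set with boundary S'. -/
/-!
Toggling a single edge `e` in a chain changes its boundary by `{u} Δ {v}` and its weight by
at most `φ e ≥ 0`. So any chain `R'` with boundary `S'` yields the chain `R' Δ {e}` with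
boundary `S`, of weight at most `φ(R') + φ(e)`; minimality of `R` gives
`φ(R) ≤ φ(R') + φ(e)`, that is `φ(R \ {e}) ≤ φ(R')`.
-/

open Finset

/-- Degree (with multiplicity, loops counted twice) of a vertex `v` in the edge set `R`. -/
def edgeDeg {V E : Type*} [DecidableEq V] (ends : E → V × V) (R : Finset E) (v : V) : ℕ :=
  ∑ e ∈ R, ((if (ends e).1 = v then 1 else 0) + (if (ends e).2 = v then 1 else 0))

/-- The boundary `∂R`: the set of vertices incident to an odd number of edges of `R`. -/
def bdry {V E : Type*} [Fintype V] [DecidableEq V] (ends : E → V × V) (R : Finset E) :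
    Finset V :=
  Finset.univ.filter fun v => Odd (edgeDeg ends R v)

lemma symmDiff_singleton_eq_erase {α : Type*} [DecidableEq α] {s : Finset α} {a : α}
    (ha : a ∈ s) :
    symmDiff s {a} = s.erase a := by
  ext x
  by_cases hx : x = a <;> simp [mem_symmDiff, hx, ha]

lemma symmDiff_singleton_eq_insert {α : Type*} [DecidableEq α] {s : Finset α} {a : α}
    (ha : a ∉ s) :
    symmDiff s {a} = insert a s := by
  ext x
  by_cases hx : x = a <;> simp [mem_symmDiff, hx, ha]

section Boundary

variable {V E : Type*} [Fintype V] [DecidableEq V] [DecidableEq E] (ends : E → V × V)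

lemma bdry_erase (R : Finset E) {e : E} (he : e ∈ R) :
    bdry ends (R.erase e) = symmDiff (bdry ends R) (symmDiff {(ends e).1} {(ends e).2}) := by
  ext w
  simp only [bdry, mem_filter, mem_univ, true_and, mem_symmDiff, mem_singleton]
  have hdeg : edgeDeg ends R w =
      ((if (ends e).1 = w then 1 else 0) + (if (ends e).2 = w then 1 else 0)) +
        edgeDeg ends (R.erase e) w := (add_sum_erase R _ he).symm
  by_cases h1 : (ends e).1 = w <;> by_cases h2 : (ends e).2 = w <;>
    simp [hdeg, h1, h2, eq_comm (a := w), Nat.odd_iff, Nat.add_mod] <;> omega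

lemma bdry_insert (R : Finset E) {e : E} (he : e ∉ R) :
    bdry ends (insert e R) = symmDiff (bdry ends R) (symmDiff {(ends e).1} {(ends e).2}) := by
  have h := bdry_erase ends (insert e R) (mem_insert_self e R)
  rw [erase_insert he] at h
  rw [h, symmDiff_symmDiff_cancel_right]

lemma bdry_symmDiff_singleton (R : Finset E) (e : E) :
    bdry ends (symmDiff R {e}) = symmDiff (bdry ends R) (symmDiff {(ends e).1} {(ends e).2}) := by
  by_cases he : e ∈ R
  · rw [symmDiff_singleton_eq_erase he, bdry_erase ends R he]
  · rw [symmDiff_singleton_eq_insert he, bdry_insert ends R he]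

end Boundary

lemma sum_symmDiff_singleton_le {E : Type*} [DecidableEq E] (φ : E → ℝ) (R : Finset E)
    {e : E} (hφe : 0 ≤ φ e) : ∑ f ∈ symmDiff R {e}, φ f ≤ ∑ f ∈ R, φ f + φ e := by
  by_cases he : e ∈ R
  · have := add_sum_erase R φ he
    rw [symmDiff_singleton_eq_erase he]
    linarith
  · rw [symmDiff_singleton_eq_insert he, sum_insert he, add_comm]

/-- Proposition inside the proof of Lemma 3: if `R` is a minimum-weight chain with
`∂R = S` and `e = (u,v) ∈ R`, then `R \ {e}` is a minimum-weight chain with boundary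
`S' = S Δ {u,v}` (written as `S Δ ({u} Δ {v})`). -/
theorem erase_min_weight_chain
    {V E : Type*} [Fintype V] [DecidableEq V] [DecidableEq E]
    (ends : E → V × V) (φ : E → ℝ) (hφ : ∀ e, 0 ≤ φ e)
    (S : Finset V) (R : Finset E)
    (hR : bdry ends R = S)
    (hmin : ∀ R' : Finset E, bdry ends R' = S → ∑ f ∈ R, φ f ≤ ∑ f ∈ R', φ f)
    (e : E) (he : e ∈ R) (u v : V) (hends : ends e = (u, v))
    (S' : Finset V) (hS' : S' = symmDiff S (symmDiff {u} {v})) :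
    bdry ends (R.erase e) = S' ∧
      ∀ R' : Finset E, bdry ends R' = S' → ∑ f ∈ R.erase e, φ f ≤ ∑ f ∈ R', φ f := by
  refine ⟨by rw [bdry_erase ends R he, hR, hends, hS'], fun R' hR' => ?_⟩
  have hbdry : bdry ends (symmDiff R' {e}) = S := by
    rw [bdry_symmDiff_singleton, hR', hS', hends, symmDiff_symmDiff_cancel_right]
  have hsplit := add_sum_erase R φ he
  have hmin' := hmin _ hbdry
  have htoggle := sum_symmDiff_singleton_le φ R' (hφ e)
  linarith
end

section
/- Let G = (V, E) be a finite graph, Γ ⊆ E a cut of G associated to a partition V = V₀ ⊔ V₁, and T ⊆ V with T ∩ V₀ = ∅. Then all edge sets E' ⊆ E satisfying (∂E') \ T = S have the same parity of |E' ∩ Γ|, namely the parity of |S ∩ V₀|. -/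
/-!
Count the edge–vertex incidences between `E'` and `V₀` modulo 2 in two ways. Vertex by vertex,
the sum of the degrees over `V₀` is the number of odd-degree vertices of `V₀`, that is
`|∂E' ∩ V₀| = |S ∩ V₀|` because `T` misses `V₀`. Edge by edge, an edge has an odd number of
endpoints in `V₀` exactly when it crosses the cut, so the same sum is `|E' ∩ Γ|`.
-/

open Finset

theorem Finset.natCast_card_filter_odd {ι : Type*} (s : Finset ι) (f : ι → ℕ) :
    ((s.filter fun i => Odd (f i)).card : ZMod 2) = ∑ i ∈ s, (f i : ZMod 2) := by
  rw [natCast_card_filter]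
  refine sum_congr rfl fun i _ => ?_
  split_ifs with h
  · exact ((ZMod.natCast_eq_one_iff_odd).2 h).symm
  · exact ((ZMod.natCast_eq_zero_iff_even).2 (Nat.not_odd_iff_even.1 h)).symm

theorem odd_ite_add_ite_iff (p q : Prop) [Decidable p] [Decidable q] :
    Odd ((if p then 1 else 0) + (if q then 1 else 0)) ↔ (p ↔ ¬q) := by
  by_cases p <;> by_cases q <;> simp_all

section Incidence

variable {V E : Type*} [DecidableEq V] (ends : E → V × V)

theorem sum_edgeDeg (R : Finset E) (A : Finset V) :
    ∑ v ∈ A, edgeDeg ends R v =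
      ∑ e ∈ R, ((if (ends e).1 ∈ A then 1 else 0) + (if (ends e).2 ∈ A then 1 else 0)) := by
  simp only [edgeDeg]
  rw [sum_comm]
  refine sum_congr rfl fun e _ => ?_
  rw [sum_add_distrib, sum_ite_eq, sum_ite_eq]

theorem natCast_card_inter_cut_eq_sum_edgeDeg [DecidableEq E] (A : Finset V) (Γ : Finset E)
    (hΓ : ∀ e, e ∈ Γ ↔ ((ends e).1 ∈ A ↔ (ends e).2 ∉ A)) (R : Finset E) :
    ((R ∩ Γ).card : ZMod 2) = ∑ v ∈ A, (edgeDeg ends R v : ZMod 2) := by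
  have hcross : R ∩ Γ = R.filter fun e =>
      Odd ((if (ends e).1 ∈ A then 1 else 0) + (if (ends e).2 ∈ A then 1 else 0)) := by
    simp only [odd_ite_add_ite_iff, ← hΓ, filter_mem_eq_inter]
  rw [hcross, natCast_card_filter_odd, ← Nat.cast_sum, ← Nat.cast_sum, sum_edgeDeg]

theorem bdry_inter [Fintype V] (R : Finset E) (A : Finset V) :
    bdry ends R ∩ A = A.filter fun v => Odd (edgeDeg ends R v) := by
  rw [bdry, filter_inter, univ_inter]

end Incidence

theorem cut_parity_syndrome_general
    {V E : Type*} [Fintype V] [DecidableEq V] [DecidableEq E]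
    (ends : E → V × V) (V₀ : Finset V)
    (Γ : Finset E)
    (hΓ : ∀ e, e ∈ Γ ↔ ((ends e).1 ∈ V₀ ↔ (ends e).2 ∉ V₀))
    (T : Finset V) (hT : T ∩ V₀ = ∅)
    (S : Finset V) (E' : Finset E) (hE' : (bdry ends E') \ T = S) :
    (E' ∩ Γ).card % 2 = (S ∩ V₀).card % 2 := by
  have hS : S ∩ V₀ = V₀.filter fun v => Odd (edgeDeg ends E' v) := by
    have hbdry : Disjoint (bdry ends E' ∩ V₀) T :=
      (disjoint_iff_inter_eq_empty.2 hT).symm.mono_left inter_subset_right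
    rw [← hE', sdiff_inter_right_comm, sdiff_eq_self_of_disjoint hbdry, bdry_inter]
  rw [← ZMod.natCast_eq_natCast_iff', natCast_card_inter_cut_eq_sum_edgeDeg ends V₀ Γ hΓ, hS,
    natCast_card_filter_odd]

/-- Lemma 2, Case 1: if `Γ` is the cut of a partition `V = V₀ ⊔ V₁` and `T ∩ V₀ = ∅`,
then every edge set `E'` with `(∂E') \ T = S` has parity of `|E' ∩ Γ|` equal to the
parity of `|S ∩ V₀|`. -/
theorem cut_parity_syndrome
    {V E : Type*} [Fintype V] [DecidableEq V] [DecidableEq E]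
    (ends : E → V × V) (V₀ V₁ : Finset V)
    (hcover : ∀ v, v ∈ V₀ ∨ v ∈ V₁) (hdisj : ∀ v, ¬(v ∈ V₀ ∧ v ∈ V₁))
    (Γ : Finset E)
    (hΓ : ∀ e, e ∈ Γ ↔ ((ends e).1 ∈ V₀ ↔ (ends e).2 ∉ V₀))
    (T : Finset V) (hT : T ∩ V₀ = ∅)
    (S : Finset V) (E' : Finset E) (hE' : (bdry ends E') \ T = S) :
    (E' ∩ Γ).card % 2 = (S ∩ V₀).card % 2 :=
  cut_parity_syndrome_general ends V₀ Γ hΓ T hT S E' hE'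
end

section
/- Let G = (V, E) be a finite graph with nonnegative edge weights φ, fix S ⊆ V, and let R₀ be a minimum-weight edge set with ∂R₀ = S. Let Γ ⊆ E and define the parity ε(R) = |R ∩ Γ| mod 2 and the set C_odd of cycles (edge sets C with ∂C = ∅) having ε(C) = 1, assumed nonempty. Define δ = min_{C ∈ C_odd} φ(R₀ Δ C) − φ(R₀). Then δ ≥ 0, and δ = 0 if and only if there exists a minimum-weight edge set R with ∂R = S and ε(R) ≠ ε(R₀). -/
/-!
Since `∂` is additive over `𝔽₂` (`∂(A Δ B) = ∂A Δ ∂B`), `C ↦ R₀ Δ C` is a bijection from the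
cycles onto the chains with boundary `S`, and it flips the parity `ε` exactly on the odd cycles.
So `δ` is the least excess weight over `φ(R₀)` of a chain with boundary `S` and parity opposite
to `ε(R₀)`; it is nonnegative by minimality of `R₀`, and it vanishes iff such a chain is itself
of minimum weight.
-/

open Finset

open scoped symmDiff

theorem Finset.sum_symmDiff_add_two_nsmul_sum_inter {α M : Type*} [DecidableEq α]
    [AddCommMonoid M] (s t : Finset α) (f : α → M) :
    ∑ a ∈ s ∆ t, f a + 2 • ∑ a ∈ s ∩ t, f a = ∑ a ∈ s, f a + ∑ a ∈ t, f a := by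
  have hunion : ∑ a ∈ s ∆ t, f a + ∑ a ∈ s ∩ t, f a = ∑ a ∈ s ∪ t, f a := by
    rw [← inf_eq_inter, ← sum_union (disjoint_symmDiff_inf s t)]
    exact congrArg (∑ a ∈ ·, f a) (symmDiff_sup_inf s t)
  rw [two_nsmul, ← add_assoc, hunion, sum_union_inter]

theorem Finset.card_symmDiff_inter_mod_two {α : Type*} [DecidableEq α] (s t u : Finset α) :
    (s ∆ t ∩ u).card % 2 = ((s ∩ u).card + (t ∩ u).card) % 2 := by
  have h := sum_symmDiff_add_two_nsmul_sum_inter (s ∩ u) (t ∩ u) fun _ => 1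
  simp only [sum_const, smul_eq_mul, mul_one] at h
  rw [show s ∆ t ∩ u = (s ∩ u) ∆ (t ∩ u) from inf_symmDiff_distrib_right s t u]
  omega

section Boundary

variable {V E : Type*} [DecidableEq V] [DecidableEq E] (ends : E → V × V)

theorem edgeDeg_symmDiff_add (A B : Finset E) (v : V) :
    edgeDeg ends (A ∆ B) v + 2 * edgeDeg ends (A ∩ B) v =
      edgeDeg ends A v + edgeDeg ends B v :=
  sum_symmDiff_add_two_nsmul_sum_inter A B _

variable [Fintype V]

theorem bdry_symmDiff (A B : Finset E) :
    bdry ends (A ∆ B) = bdry ends A ∆ bdry ends B := by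
  ext v
  have h := edgeDeg_symmDiff_add ends A B v
  simp only [bdry, mem_filter, mem_univ, true_and, mem_symmDiff, Nat.odd_iff]
  omega

theorem bdry_symmDiff_of_bdry_eq_empty {A C : Finset E} (hC : bdry ends C = ∅) :
    bdry ends (A ∆ C) = bdry ends A := by
  rw [bdry_symmDiff, hC, ← bot_eq_empty, symmDiff_bot]

theorem bdry_symmDiff_eq_empty_of_bdry_eq {A B : Finset E} (h : bdry ends A = bdry ends B) :
    bdry ends (A ∆ B) = ∅ := by
  rw [bdry_symmDiff, h, symmDiff_self, bot_eq_empty]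

end Boundary

theorem delta_zero_iff_uncorrectable_general
    {V E : Type*} [Fintype V] [DecidableEq V] [DecidableEq E]
    (ends : E → V × V) (φ : E → ℝ)
    (Γ : Finset E) (S : Finset V) (R₀ : Finset E)
    (hR₀ : bdry ends R₀ = S)
    (hmin : ∀ R' : Finset E, bdry ends R' = S → ∑ f ∈ R₀, φ f ≤ ∑ f ∈ R', φ f)
    (Codd : Finset (Finset E))
    (hCodd : ∀ C : Finset E, C ∈ Codd ↔ bdry ends C = ∅ ∧ (C ∩ Γ).card % 2 = 1)
    (hne : Codd.Nonempty)
    (δ : ℝ)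
    (hδ : δ = Codd.inf' hne fun C => (∑ f ∈ symmDiff R₀ C, φ f) - ∑ f ∈ R₀, φ f) :
    0 ≤ δ ∧
      (δ = 0 ↔ ∃ R : Finset E, bdry ends R = S ∧
        (∀ R' : Finset E, bdry ends R' = S → ∑ f ∈ R, φ f ≤ ∑ f ∈ R', φ f) ∧
        (R ∩ Γ).card % 2 ≠ (R₀ ∩ Γ).card % 2) := by
  have hbdry (C) (hC : C ∈ Codd) : bdry ends (R₀ ∆ C) = S :=
    hR₀ ▸ bdry_symmDiff_of_bdry_eq_empty ends ((hCodd C).1 hC).1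
  have hδ_nonneg : 0 ≤ δ :=
    hδ ▸ le_inf' _ _ fun C hC => sub_nonneg.2 (hmin _ (hbdry C hC))
  refine ⟨hδ_nonneg, fun hδ_zero => ?_, fun ⟨R, hR, hRmin, hRpar⟩ => ?_⟩
  · obtain ⟨C, hC, hCδ⟩ := exists_mem_eq_inf' hne
      fun C => (∑ f ∈ R₀ ∆ C, φ f) - ∑ f ∈ R₀, φ f
    have hweight : ∑ f ∈ R₀ ∆ C, φ f = ∑ f ∈ R₀, φ f := by linarith
    have hCpar := ((hCodd C).1 hC).2
    refine ⟨R₀ ∆ C, hbdry C hC, fun R' hR' => hweight ▸ hmin R' hR', ?_⟩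
    rw [card_symmDiff_inter_mod_two]
    omega
  · have hC : R₀ ∆ R ∈ Codd := (hCodd _).2
      ⟨bdry_symmDiff_eq_empty_of_bdry_eq ends (hR₀.trans hR.symm),
        by rw [card_symmDiff_inter_mod_two]; omega⟩
    have hweight : ∑ f ∈ R, φ f = ∑ f ∈ R₀, φ f := le_antisymm (hRmin R₀ hR₀) (hmin R hR)
    have hδ_nonpos : δ ≤ 0 := by
      have := hδ ▸ inf'_le (fun C => (∑ f ∈ R₀ ∆ C, φ f) - ∑ f ∈ R₀, φ f) hC
      rwa [symmDiff_symmDiff_cancel_left, hweight, sub_self] at this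
    exact le_antisymm hδ_nonpos hδ_nonneg

/-- Key claim in the proof of Lemma 1: with `R₀` a minimum-weight chain of boundary `S`,
`C_odd` the (nonempty) set of odd-parity cycles, and
`δ = min_{C ∈ C_odd} φ(R₀ Δ C) − φ(R₀)`, one has `δ ≥ 0`, and `δ = 0` iff there is a
minimum-weight chain `R` with `∂R = S` of parity different from that of `R₀`. -/
theorem delta_zero_iff_uncorrectable
    {V E : Type*} [Fintype V] [DecidableEq V] [DecidableEq E]
    (ends : E → V × V) (φ : E → ℝ) (hφ : ∀ e, 0 ≤ φ e)
    (Γ : Finset E) (S : Finset V) (R₀ : Finset E)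
    (hR₀ : bdry ends R₀ = S)
    (hmin : ∀ R' : Finset E, bdry ends R' = S → ∑ f ∈ R₀, φ f ≤ ∑ f ∈ R', φ f)
    (Codd : Finset (Finset E))
    (hCodd : ∀ C : Finset E, C ∈ Codd ↔ bdry ends C = ∅ ∧ (C ∩ Γ).card % 2 = 1)
    (hne : Codd.Nonempty)
    (δ : ℝ)
    (hδ : δ = Codd.inf' hne fun C => (∑ f ∈ symmDiff R₀ C, φ f) - ∑ f ∈ R₀, φ f) :
    0 ≤ δ ∧
      (δ = 0 ↔ ∃ R : Finset E, bdry ends R = S ∧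
        (∀ R' : Finset E, bdry ends R' = S → ∑ f ∈ R, φ f ≤ ∑ f ∈ R', φ f) ∧
        (R ∩ Γ).card % 2 ≠ (R₀ ∩ Γ).card % 2) :=
  delta_zero_iff_uncorrectable_general ends φ Γ S R₀ hR₀ hmin Codd hCodd hne δ hδ
end
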